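/- For all m ≥ 1 and t ≥ 0, the complete homogeneous symmetric polynomial satisfies h_t(1+y_1, ..., 1+y_m) = Σ_{k=0}^t C(m+t−1, m+k−1) h_k(y_1, ..., y_m), where C denotes binomial coefficients. -/

import Mathlib

/-!
Compare the coefficients of `y^e`. Expanding each `(1 + y_i)^{d_i}` binomially, the left side
contributes `∑_{|d| = t} ∏_i C(d_i, e_i)`. This is the coefficient of `z^t` in
`∏_i z^{e_i} / (1 - z)^{e_i + 1} = z^{|e|} / (1 - z)^{m + |e|}`, namely `C(m + t - 1, m + |e| - 1)`;
on the right only the term `k = |e|` contributes, with the same binomial coefficient.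
-/

open MvPolynomial

/-- The complete homogeneous symmetric polynomial `h_k(y_1,…,y_m)`:
the sum of all monomials of total degree `k`. -/
noncomputable def hpoly (m k : ℕ) : MvPolynomial (Fin m) ℤ :=
  ∑ d ∈ Finset.finsuppAntidiag (Finset.univ : Finset (Fin m)) k, monomial d (1 : ℤ)

open Finset

namespace PowerSeries

theorem mk_choose_eq_X_pow_mul_invOneSubPow (S : Type*) [CommRing S] (k : ℕ) :
    (mk fun n => (n.choose k : S)) = X ^ k * (invOneSubPow S (k + 1)).val := by
  ext n
  rw [coeff_mk, coeff_X_pow_mul', invOneSubPow_val_succ_eq_mk_add_choose, coeff_mk]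
  split_ifs with h
  · rw [Nat.add_sub_cancel' h]
  · rw [Nat.choose_eq_zero_of_lt (by omega), Nat.cast_zero]

theorem prod_invOneSubPow (S : Type*) [CommRing S] {ι : Type*} (s : Finset ι) (f : ι → ℕ) :
    ∏ i ∈ s, invOneSubPow S (f i) = invOneSubPow S (∑ i ∈ s, f i) := by
  simp_rw [invOneSubPow_eq_inv_one_sub_pow, prod_pow_eq_pow_sum]

theorem sum_finsuppAntidiag_prod_choose {ι : Type*} [DecidableEq ι] {s : Finset ι}
    (hs : s.Nonempty) (e : ι → ℕ) (n : ℕ) :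
    ∑ d ∈ finsuppAntidiag s n, ∏ i ∈ s, (d i).choose (e i) =
      (#s + n - 1).choose (#s + ∑ i ∈ s, e i - 1) := by
  apply Nat.cast_injective (R := ℤ)
  push_cast
  have hcard : 0 < #s := hs.card_pos
  calc ∑ d ∈ finsuppAntidiag s n, ∏ i ∈ s, ((d i).choose (e i) : ℤ)
      = coeff n (∏ i ∈ s, mk fun k => (k.choose (e i) : ℤ)) := by
        simp only [coeff_prod, coeff_mk]
    _ = coeff n (X ^ (∑ i ∈ s, e i) * (invOneSubPow ℤ (∑ i ∈ s, e i + #s)).val) := by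
        simp_rw [mk_choose_eq_X_pow_mul_invOneSubPow, prod_mul_distrib, prod_pow_eq_pow_sum,
          ← Units.coe_prod, prod_invOneSubPow, sum_add_distrib, sum_const, smul_eq_mul, mul_one]
    _ = ((#s + n - 1).choose (#s + ∑ i ∈ s, e i - 1) : ℕ) := by
        rw [coeff_X_pow_mul', invOneSubPow_val_eq_mk_sub_one_add_choose_of_pos _ _ (by omega),
          coeff_mk]
        split_ifs with h
        · rw [show ∑ i ∈ s, e i + #s - 1 + (n - ∑ i ∈ s, e i) = #s + n - 1 by omega,
            add_comm (∑ i ∈ s, e i)]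
        · rw [Nat.choose_eq_zero_of_lt (by omega), Nat.cast_zero]

end PowerSeries

theorem MvPolynomial.coeff_prod_one_add_X_pow {σ R : Type*} [Fintype σ] [CommSemiring R]
    (d : σ → ℕ) (e : σ →₀ ℕ) :
    coeff e (∏ i, (1 + X i : MvPolynomial σ R) ^ d i) = ∏ i, ((d i).choose (e i) : R) := by
  classical
  simp_rw [add_comm (1 : MvPolynomial σ R), add_pow, one_pow, mul_one, prod_univ_sum,
    prod_mul_distrib, ← Nat.cast_prod, ← map_natCast (C : R →+* MvPolynomial σ R), coeff_sum,
    mul_comm _ (C _), coeff_C_mul, coeff_prod_X_pow]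
  have hind (x : σ → ℕ) : e = Finsupp.indicator univ (fun i _ => x i) ↔ ⇑e = x := by
    rw [Finsupp.ext_iff, _root_.funext_iff]
    simp only [Finsupp.indicator_of_mem (mem_univ _)]
  simp_rw [hind, mul_ite, mul_one, mul_zero, sum_ite_eq, Fintype.mem_piFinset, mem_range,
    Nat.lt_succ_iff, ite_eq_left_iff, not_forall, not_le, forall_exists_index]
  intro i hi
  rw [prod_eq_zero (mem_univ i) (Nat.choose_eq_zero_of_lt hi), Nat.cast_zero]

theorem aeval_hpoly {A : Type*} [CommSemiring A] [Algebra ℤ A] {m : ℕ} (x : Fin m → A) (k : ℕ) :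
    aeval x (hpoly m k) = ∑ d ∈ finsuppAntidiag univ k, ∏ i, x i ^ d i := by
  simp only [hpoly, map_sum, aeval_monomial, map_one, one_mul,
    Finsupp.prod_fintype _ _ (fun _ => pow_zero _)]

theorem coeff_hpoly {m : ℕ} (k : ℕ) (e : Fin m →₀ ℕ) :
    coeff e (hpoly m k) = if ∑ i, e i = k then 1 else 0 := by
  simp [hpoly, coeff_sum, coeff_monomial, mem_finsuppAntidiag]

/-- `h_t(1+y_1,…,1+y_m) = Σ_{k=0}^t C(m+t−1, m+k−1) h_k(y_1,…,y_m)`. -/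
theorem stmt17 {m : ℕ} (hm : 1 ≤ m) (t : ℕ) :
    MvPolynomial.aeval (fun i => 1 + MvPolynomial.X i) (hpoly m t) =
      ∑ k ∈ Finset.range (t + 1),
        MvPolynomial.C (((m + t - 1).choose (m + k - 1) : ℤ)) * hpoly m k := by
  ext e
  have hne : (univ : Finset (Fin m)).Nonempty := univ_nonempty_iff.mpr ⟨⟨0, hm⟩⟩
  have hlhs : coeff e (aeval (fun i => 1 + X i) (hpoly m t)) =
      ((m + t - 1).choose (m + ∑ i, e i - 1) : ℤ) := by
    simp_rw [aeval_hpoly, coeff_sum, coeff_prod_one_add_X_pow, ← Nat.cast_prod, ← Nat.cast_sum,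
      PowerSeries.sum_finsuppAntidiag_prod_choose hne, card_univ, Fintype.card_fin]
  simp_rw [hlhs, coeff_sum, coeff_C_mul, coeff_hpoly, mul_ite, mul_one, mul_zero, sum_ite_eq,
    mem_range]
  split_ifs with h
  · rfl
  · rw [Nat.choose_eq_zero_of_lt (by omega), Nat.cast_zero]
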